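/- Let C be a cyclic order on a set A, X ⊆ A, and a,a',b,b',c,c' ∈ A such that a ∼_X a', b ∼_X b', c ∼_X c', while a ≁_X b, a ≁_X c, and b ≁_X c. Then C(a,b,c) holds if and only if C(a',b',c') holds. -/

import Mathlib

/-!
Closeness is an equivalence relation: the arc from `a` to `c` through `b` is covered by the
arcs `a..b` and `b..c` together with `b`, and in the remaining cases one arc sits inside another.
It then suffices to replace one vertex at a time. If `C(a,b,c)` held but `C(a',b,c)` failed, the
points would lie in the cyclic order `b, a', c, a`; then `b` is on the arc from `a` to `a'` and `c`
on the arc from `a'` to `a`, so the finiteness witnessing `a ∼_X a'` would make `a` close to `b`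
or to `c`.
-/

/-- `a` and `b` are `X`-close: `X ∩ C(a,-,b)` or `X ∩ C(b,-,a)` is finite. -/
def closeRel {A : Type*} (C : A → A → A → Prop) (X : Set A) (a b : A) : Prop :=
  (X ∩ {x | C a x b}).Finite ∨ (X ∩ {x | C b x a}).Finite

open Set

section CyclicOrder

variable {A : Type*} {C : A → A → A → Prop} {X : Set A} {a a' b c p q r : A}
variable (hcyc : ∀ a b c : A, C a b c → C b c a)
variable (hasym : ∀ a b c : A, C a b c → ¬ C c b a)
variable (htrans : ∀ a b c d : A, C a b c → C a c d → C a b d)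
variable (htot : ∀ a b c : A, a ≠ b → a ≠ c → b ≠ c → C a b c ∨ C c b a)

include hcyc hasym in
theorem ne_of_btw (h : C a b c) : a ≠ b := by
  rintro rfl
  exact hasym a c a (hcyc a a c h) (hcyc a a c h)

include htrans in
theorem arc_subset_arc_left (h : C p q r) : {x | C p x q} ⊆ {x | C p x r} :=
  fun x hx => htrans p x q r hx h

include hcyc htrans in
theorem arc_subset_arc_right (h : C p q r) : {x | C q x r} ⊆ {x | C p x r} := fun x hx =>
  hcyc _ _ _ (htrans r p q x (hcyc _ _ _ (hcyc _ _ _ h)) (hcyc _ _ _ (hcyc _ _ _ hx)))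

include hcyc hasym htrans htot in
theorem arc_subset_insert_union (hpq : p ≠ q) :
    {x | C p x r} ⊆ insert q ({x | C p x q} ∪ {x | C q x r}) := by
  intro x hx
  rcases eq_or_ne x q with rfl | hxq
  · exact mem_insert x _
  rcases htot p x q (ne_of_btw hcyc hasym hx) hpq hxq with hpxq | hqxp
  · exact Or.inr (Or.inl hpxq)
  · have hxrq : C x r q := htrans x r p q (hcyc _ _ _ hx) (hcyc _ _ _ hqxp)
    exact Or.inr (Or.inr (hcyc _ _ _ (hcyc _ _ _ hxrq)))

namespace closeRel

theorem symm (h : closeRel C X a b) : closeRel C X b a := Or.symm h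

include hasym in
theorem refl (a : A) : closeRel C X a a :=
  Or.inl (finite_empty.subset fun x ⟨_, hx⟩ => hasym a x a hx hx)

include hcyc hasym htrans htot in
theorem trans_of_btw (h : C a b c) (hab : closeRel C X a b) (hbc : closeRel C X b c) :
    closeRel C X a c := by
  rcases hab with hab | hba
  · rcases hbc with hbc | hcb
    · refine Or.inl (((hab.union hbc).insert b).subset ?_)
      rintro x ⟨hX, hx⟩
      rcases arc_subset_insert_union hcyc hasym htrans htot (ne_of_btw hcyc hasym h) hx
        with rfl | hx | hx
      · exact mem_insert x _
      · exact Or.inr (Or.inl ⟨hX, hx⟩)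
      · exact Or.inr (Or.inr ⟨hX, hx⟩)
    · exact Or.inr (hcb.subset
        (inter_subset_inter_right X (arc_subset_arc_left htrans (hcyc _ _ _ (hcyc _ _ _ h)))))
  · exact Or.inr (hba.subset
      (inter_subset_inter_right X (arc_subset_arc_right hcyc htrans (hcyc _ _ _ h))))

include hcyc hasym htrans htot in
theorem trans (hab : closeRel C X a b) (hbc : closeRel C X b c) : closeRel C X a c := by
  rcases eq_or_ne a b with rfl | hab'
  · exact hbc
  rcases eq_or_ne b c with rfl | hbc'
  · exact hab
  rcases eq_or_ne a c with rfl | hac'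
  · exact refl hasym a
  rcases htot a b c hab' hac' hbc' with habc | hcba
  · exact trans_of_btw hcyc hasym htrans htot habc hab hbc
  · exact (trans_of_btw hcyc hasym htrans htot hcba hbc.symm hab.symm).symm

include hcyc hasym htrans htot in
theorem equivalence : Equivalence (closeRel C X) :=
  ⟨refl hasym, symm, trans hcyc hasym htrans htot⟩

end closeRel

include hcyc hasym htrans htot in
theorem btw_of_closeRel_left (h : C a b c) (haa : closeRel C X a a')
    (hab : ¬ closeRel C X a b) (hac : ¬ closeRel C X a c) : C a' b c := by
  have hba' : b ≠ a' := by rintro rfl; exact hab haa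
  have ha'c : a' ≠ c := by rintro rfl; exact hac haa
  rcases htot b a' c hba' (ne_of_btw hcyc hasym (hcyc _ _ _ h)) ha'c with hba'c | hca'b
  · have cyc₂ : ∀ {x y z : A}, C x y z → C z x y := fun h => hcyc _ _ _ (hcyc _ _ _ h)
    have hb : C a b a' := cyc₂ (htrans b a' c a hba'c (hcyc _ _ _ h))
    have hc : C a' c a := cyc₂ (htrans c a b a' (cyc₂ h) (cyc₂ hba'c))
    rcases haa with hfin | hfin
    · exact absurd (Or.inl (hfin.subset
        (inter_subset_inter_right X (arc_subset_arc_left htrans hb)))) hab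
    · exact absurd (Or.inr (hfin.subset
        (inter_subset_inter_right X (arc_subset_arc_right hcyc htrans hc)))) hac
  · exact hcyc _ _ _ hca'b

include hcyc hasym htrans htot in
theorem btw_of_closeRel (h : C a b c)
    (haa : closeRel C X a a') (hbb : closeRel C X b b') (hcc : closeRel C X c c')
    (hab : ¬ closeRel C X a b) (hac : ¬ closeRel C X a c) (hbc : ¬ closeRel C X b c) :
    C a' b' c' := by
  have E := closeRel.equivalence (X := X) hcyc hasym htrans htot
  have hba' : ¬ closeRel C X b a' := fun h' => hab (E.trans haa h'.symm)
  have hca' : ¬ closeRel C X c a' := fun h' => hac (E.trans haa h'.symm)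
  have hcb' : ¬ closeRel C X c b' := fun h' => hbc (E.trans hbb h'.symm)
  have h₁ : C a' b c := btw_of_closeRel_left hcyc hasym htrans htot h haa hab hac
  have h₂ : C b' c a' :=
    btw_of_closeRel_left hcyc hasym htrans htot (hcyc _ _ _ h₁) hbb hbc hba'
  have h₃ : C c' a' b' :=
    btw_of_closeRel_left hcyc hasym htrans htot (hcyc _ _ _ h₂) hcc hca' hcb'
  exact hcyc _ _ _ h₃

end CyclicOrder

/-- If `a ∼_X a'`, `b ∼_X b'`, `c ∼_X c'` and `a,b,c` are pairwise non-`X`-close,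
then `C(a,b,c) ↔ C(a',b',c')`. -/
theorem stmt4 {A : Type*} (C : A → A → A → Prop) (X : Set A)
    (hcyc : ∀ a b c : A, C a b c → C b c a)
    (hasym : ∀ a b c : A, C a b c → ¬ C c b a)
    (htrans : ∀ a b c d : A, C a b c → C a c d → C a b d)
    (htot : ∀ a b c : A, a ≠ b → a ≠ c → b ≠ c → C a b c ∨ C c b a)
    (a a' b b' c c' : A)
    (haa : closeRel C X a a') (hbb : closeRel C X b b') (hcc : closeRel C X c c')
    (hab : ¬ closeRel C X a b) (hac : ¬ closeRel C X a c) (hbc : ¬ closeRel C X b c) :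
    C a b c ↔ C a' b' c' := by
  have E := closeRel.equivalence (X := X) hcyc hasym htrans htot
  have hab' : ¬ closeRel C X a' b' := fun h => hab (E.trans haa (E.trans h hbb.symm))
  have hac' : ¬ closeRel C X a' c' := fun h => hac (E.trans haa (E.trans h hcc.symm))
  have hbc' : ¬ closeRel C X b' c' := fun h => hbc (E.trans hbb (E.trans h hcc.symm))
  exact ⟨fun h => btw_of_closeRel hcyc hasym htrans htot h haa hbb hcc hab hac hbc,
    fun h => btw_of_closeRel hcyc hasym htrans htot h haa.symm hbb.symm hcc.symm hab' hac' hbc'⟩
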